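/- arXiv:1511.06664 — 2 statements merged into one kernel-verified Lean document; each statement's English description precedes it below -/
import Mathlib

section
/- Define ω ∈ S_{m+n} by ω(i) = m+1-i for i ∈ {1,...,m} and ω(i) = 2m+n+1-i for i ∈ {m+1,...,m+n}. Let C be an m×n Cauchon diagram with associated permutation v, let k ∈ {1,...,n}, and let (x_1,y_1),...,(x_t,y_t) be the chain rooted at box k on the south-east border. Then ({1,...,m} \ {m+1-x_i : 1 ≤ i ≤ t}) ∪ {2m+n+1-y_i : 1 ≤ i ≤ t} = ({1,...,m} ∪ {m+n-k+1,...,m+n}) \ (ω∘v)({1,...,k}), where (ω∘v)({1,...,k}) denotes the image of {1,...,k} under the composite ω∘v. -/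
/-- The transposition `s_{a+b-m-1} = (a+b-m-1, a+b-m)` assigned to the grid square `(a,b)`. -/
def sqPerm (m : ℕ) (p : ℕ × ℕ) : Equiv.Perm ℕ :=
  Equiv.swap (p.1 + p.2 - m - 1) (p.1 + p.2 - m)

/-- The reading word of the set of grid squares satisfying `P`: rows are read from the
top (`a = m`) down to the bottom (`a = 1`), and within each row columns are read from the
left (`b = m+1`) to the right (`b = m+n`); factors are multiplied so that the last factor
in reading order is applied first. -/
def readingWord (m n : ℕ) (P : ℕ × ℕ → Bool) : Equiv.Perm ℕ :=
  ((List.range m).map fun i =>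
    (((List.range n).map fun j =>
      if P (m - i, m + 1 + j) then sqPerm m (m - i, m + 1 + j) else 1)).prod).prod

/-- `(a,b)` is a square of the `m × n` grid: `1 ≤ a ≤ m`, `m+1 ≤ b ≤ m+n`. -/
def InGrid (m n : ℕ) (p : ℕ × ℕ) : Prop :=
  1 ≤ p.1 ∧ p.1 ≤ m ∧ m + 1 ≤ p.2 ∧ p.2 ≤ m + n

/-- A colouring (`true` = black, `false` = white) is a Cauchon diagram if for every black
square `(a,b)`, either every square `(a,b')` with `b' < b` is black, or every square
`(a',b)` with `a' > a` is black. -/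
def IsCauchon (m n : ℕ) (col : ℕ × ℕ → Bool) : Prop :=
  ∀ a b, InGrid m n (a, b) → col (a, b) = true →
    (∀ b', m + 1 ≤ b' → b' < b → col (a, b') = true) ∨
    (∀ a', a < a' → a' ≤ m → col (a', b) = true)

/-- The permutation associated to a colouring: the reading word of its set of black squares. -/
def assocPerm (m n : ℕ) (col : ℕ × ℕ → Bool) : Equiv.Perm ℕ :=
  readingWord m n col

/-- `v_{x,y}`: the reading word of the black squares `(a,b)` with `a ≥ x` and `b ≤ y`. -/
def vAt (m n : ℕ) (col : ℕ × ℕ → Bool) (x y : ℕ) : Equiv.Perm ℕ :=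
  readingWord m n fun p => col p && decide (x ≤ p.1) && decide (p.2 ≤ y)

/-- `w_{x,y}`: the reading word of all grid squares `(a,b)` with `a ≥ x` and `b ≤ y`. -/
def wAt (m n x y : ℕ) : Equiv.Perm ℕ :=
  readingWord m n fun p => decide (x ≤ p.1) && decide (p.2 ≤ y)

/-- Box `k` on the south-east border: `(1, m+k)` if `k ≤ n`, and `(k-n+1, m+n)` otherwise. -/
def boxSE (m n k : ℕ) : ℕ × ℕ :=
  if k ≤ n then (1, m + k) else (k - n + 1, m + n)

/-- `(X 1, Y 1), ..., (X t, Y t)` is the chain rooted at the square `(x,y)` of the colouring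
`col` (with `t = 0` for the empty chain). -/
def IsChainRootedAt (m n : ℕ) (col : ℕ × ℕ → Bool) (x y : ℕ)
    (t : ℕ) (X Y : ℕ → ℕ) : Prop :=
  -- every member of the chain is a white square of the grid
  (∀ i, 1 ≤ i → i ≤ t → InGrid m n (X i, Y i) ∧ col (X i, Y i) = false) ∧
  -- if `(x,y)` is white, the chain starts at `(x,y)`
  (col (x, y) = false → 1 ≤ t ∧ X 1 = x ∧ Y 1 = y) ∧
  -- if `(x,y)` is black and the chain is nonempty, it starts at the white square
  -- weakly north-west of `(x,y)` nearest to it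
  (col (x, y) = true → 1 ≤ t →
    x ≤ X 1 ∧ Y 1 ≤ y ∧
      ∀ a b, InGrid m n (a, b) → col (a, b) = false → x ≤ a → b ≤ y →
        X 1 ≤ a ∧ b ≤ Y 1) ∧
  -- the chain is empty only when there is no white square weakly north-west of `(x,y)`
  (t = 0 → ∀ a b, InGrid m n (a, b) → col (a, b) = false → x ≤ a → b ≤ y → False) ∧
  -- inductive step: each next member is the nearest white square strictly north-west
  (∀ i, 1 ≤ i → i < t →
    X i < X (i + 1) ∧ Y (i + 1) < Y i ∧
      ∀ a b, InGrid m n (a, b) → col (a, b) = false → X i < a → b < Y i →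
        X (i + 1) ≤ a ∧ b ≤ Y (i + 1)) ∧
  -- termination: no white square strictly north-west of the last member
  (1 ≤ t → ∀ a b, InGrid m n (a, b) → col (a, b) = false → X t < a → b < Y t → False)

/-!
Follow a value `j ≤ k` through the reading word `v`, row by row from the bottom; in row `a` the
value `a + d` stands on column `m+1+d`. On a black square it climbs to the next row in the same
column. A white square it meets is a member of the chain, since the column below it is black back
to the previous member; there the value slides west to the next white square of the row and
climbs from there, or, if there is none, becomes the row index `x_i`, which no higher row moves.
So `v j` is either some `x_i` or a column of `{m+1,...,m+k}` other than the `y_i`. There are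
exactly `t + (k - t) = k` such values and `v` is injective, so `v {1,...,k}` consists of all of
them; applying `ω` gives the identity.
-/

open Finset Function

theorem Finset.image_update_of_notMem {α β : Type*} [DecidableEq α] [DecidableEq β]
    {s : Finset α} {a : α} (ha : a ∉ s) (f : α → β) (b : β) :
    s.image (update f a b) = s.image f :=
  image_congr fun _ hx => update_of_ne (ne_of_mem_of_not_mem hx ha) b f

theorem Finset.image_const_tsub_Icc {a c : ℕ} (b : ℕ) (ha : a ≤ c) :
    (Icc a b).image (c - ·) = Icc (c - b) (c - a) := by
  ext u
  simp only [mem_image, mem_Icc]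
  constructor
  · rintro ⟨x, hx, rfl⟩
    omega
  · intro hu
    exact ⟨c - u, by omega, by omega⟩

theorem Finset.union_sdiff_union_sdiff {α : Type*} [DecidableEq α] {S I A B : Finset α}
    (hSI : Disjoint S I) (hA : A ⊆ S) (hB : B ⊆ I) :
    (S ∪ I) \ (A ∪ (I \ B)) = (S \ A) ∪ B := by
  ext x
  have hSI : x ∈ S → x ∉ I := fun hx => disjoint_left.mp hSI hx
  have hA : x ∈ A → x ∈ S := fun hx => hA hx
  have hB : x ∈ B → x ∈ I := fun hx => hB hx
  simp only [mem_union, mem_sdiff]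
  tauto

section ReadingWord

variable {m : ℕ} {P : ℕ × ℕ → Bool}

def rowWord (m : ℕ) (P : ℕ × ℕ → Bool) (a L : ℕ) : Equiv.Perm ℕ :=
  ((List.range L).map fun j => if P (a, m + 1 + j) then sqPerm m (a, m + 1 + j) else 1).prod

theorem sqPerm_row (m a j : ℕ) : sqPerm m (a, m + 1 + j) = Equiv.swap (a + j) (a + j + 1) := by
  unfold sqPerm
  congr 1 <;> simp only <;> omega

theorem rowWord_succ (a L : ℕ) :
    rowWord m P a (L + 1) =
      rowWord m P a L * if P (a, m + 1 + L) then Equiv.swap (a + L) (a + L + 1) else 1 := by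
  simp [rowWord, List.range_succ, sqPerm_row]

theorem rowWord_apply_of_lt_or_lt {a L p : ℕ} (hp : p < a ∨ a + L < p) :
    rowWord m P a L p = p := by
  induction L with
  | zero => simp [rowWord]
  | succ L ih =>
    rw [rowWord_succ, Equiv.Perm.mul_apply]
    split
    · rw [Equiv.swap_apply_of_ne_of_ne (by omega) (by omega), ih (by omega)]
    · exact ih (by omega)

theorem rowWord_apply_mem_Icc {a L p : ℕ} (hp : p ∈ Icc a (a + L)) :
    rowWord m P a L p ∈ Icc a (a + L) := by
  by_contra h
  have hfix : rowWord m P a L (rowWord m P a L p) = rowWord m P a L p :=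
    rowWord_apply_of_lt_or_lt (by simp only [mem_Icc] at h; omega)
  exact h (by rwa [(rowWord m P a L).injective hfix])

theorem rowWord_apply_add_of_lt {a L d : ℕ} (hd : d < L) :
    rowWord m P a L (a + d) = rowWord m P a (d + 1) (a + d) := by
  induction L with
  | zero => omega
  | succ L ih =>
    rcases (Nat.lt_succ_iff_lt_or_eq.mp hd) with hd | rfl
    · rw [rowWord_succ, Equiv.Perm.mul_apply, ← ih hd]
      split
      · rw [Equiv.swap_apply_of_ne_of_ne (by omega) (by omega)]
      · rfl
    · rfl

theorem rowWord_apply_of_black {a L d : ℕ} (hd : d < L) (hP : P (a, m + 1 + d) = true) :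
    rowWord m P a L (a + d) = a + d + 1 := by
  rw [rowWord_apply_add_of_lt hd, rowWord_succ, Equiv.Perm.mul_apply, if_pos hP,
    Equiv.swap_apply_left, rowWord_apply_of_lt_or_lt (by omega)]

theorem rowWord_apply_of_white {a L d : ℕ} (hd : d < L) (hP : P (a, m + 1 + d) = false) :
    ∃ e ≤ d, rowWord m P a L (a + d) = a + e := by
  rw [rowWord_apply_add_of_lt hd, rowWord_succ, Equiv.Perm.mul_apply, hP]
  have h : rowWord m P a d (a + d) ∈ Icc a (a + d) := rowWord_apply_mem_Icc (by simp)
  simp only [Bool.false_eq_true, if_false, Equiv.Perm.one_apply, mem_Icc] at h ⊢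
  exact ⟨rowWord m P a d (a + d) - a, by omega, by omega⟩

def rowsWord (R : ℕ → Equiv.Perm ℕ) (a : ℕ) : Equiv.Perm ℕ :=
  ((List.range a).map fun i => R (a - i)).prod

theorem rowsWord_succ (R : ℕ → Equiv.Perm ℕ) (a : ℕ) :
    rowsWord R (a + 1) = R (a + 1) * rowsWord R a := by
  simp [rowsWord, List.range_succ_eq_map, comp_def]

theorem readingWord_eq_rowsWord (m n : ℕ) (P : ℕ × ℕ → Bool) :
    readingWord m n P = rowsWord (fun a => rowWord m P a n) m := rfl

end ReadingWord

/-- A chain indexed from `0`: `(X 0, Y 0)` is a virtual corner, and each `(X (i+1), Y (i+1))` is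
the white square strictly north-west of `(X i, Y i)` nearest to it. The chain rooted at `(x+1, y)`
is the one with corner `(x, y+1)`. -/
structure IsNWChain (m n : ℕ) (col : ℕ × ℕ → Bool) (t : ℕ) (X Y : ℕ → ℕ) : Prop where
  white : ∀ i, 1 ≤ i → i ≤ t → InGrid m n (X i, Y i) ∧ col (X i, Y i) = false
  X_lt_succ : ∀ i < t, X i < X (i + 1)
  Y_succ_lt : ∀ i < t, Y (i + 1) < Y i
  nearest : ∀ i < t, ∀ a b, InGrid m n (a, b) → col (a, b) = false → X i < a → b < Y i →
    X (i + 1) ≤ a ∧ b ≤ Y (i + 1)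
  last : ∀ a b, InGrid m n (a, b) → col (a, b) = false → X t < a → b < Y t → False

theorem isNWChain_of_isChainRootedAt {m n : ℕ} {col : ℕ × ℕ → Bool} {x y t : ℕ} {X Y : ℕ → ℕ}
    (h : IsChainRootedAt m n col (x + 1) y t X Y) :
    IsNWChain m n col t (update X 0 x) (update Y 0 (y + 1)) := by
  obtain ⟨hwhite, hroot_white, hroot_black, hempty, hstep, hlast⟩ := h
  have hfirst : 1 ≤ t → x < X 1 ∧ Y 1 ≤ y ∧ ∀ a b, InGrid m n (a, b) → col (a, b) = false →
      x < a → b ≤ y → X 1 ≤ a ∧ b ≤ Y 1 := by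
    intro ht
    cases hc : col (x + 1, y)
    · obtain ⟨-, hX, hY⟩ := hroot_white hc
      exact ⟨by omega, hY.le, fun a b _ _ ha hb => ⟨by omega, by omega⟩⟩
    · obtain ⟨hX, hY, hnear⟩ := hroot_black hc ht
      exact ⟨hX, hY, fun a b hg hw ha hb => hnear a b hg hw ha hb⟩
  refine ⟨fun i hi hit => ?_, fun i hi => ?_, fun i hi => ?_, fun i hi a b hg hw ha hb => ?_,
    fun a b hg hw ha hb => ?_⟩
  · simpa [update_of_ne (show i ≠ 0 by omega)] using hwhite i hi hit
  · rcases Nat.eq_zero_or_pos i with rfl | hi0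
    · simpa using (hfirst (by omega)).1
    · simpa [update_of_ne (show i ≠ 0 by omega)] using (hstep i hi0 hi).1
  · rcases Nat.eq_zero_or_pos i with rfl | hi0
    · simpa [Nat.lt_succ_iff] using (hfirst (by omega)).2.1
    · simpa [update_of_ne (show i ≠ 0 by omega)] using (hstep i hi0 hi).2.1
  · rcases Nat.eq_zero_or_pos i with rfl | hi0
    · simp only [update_self, zero_add, update_of_ne one_ne_zero] at ha hb ⊢
      exact (hfirst (by omega)).2.2 a b hg hw ha (by omega)
    · simp only [update_of_ne (show i ≠ 0 by omega), update_of_ne (show i + 1 ≠ 0 by omega)]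
        at ha hb ⊢
      exact (hstep i hi0 hi).2.2 a b hg hw ha hb
  · rcases Nat.eq_zero_or_pos t with rfl | ht
    · simp only [update_self] at ha hb
      exact hempty rfl a b hg hw ha (by omega)
    · simp only [update_of_ne (show t ≠ 0 by omega)] at ha hb
      exact hlast ht a b hg hw ha hb

/-- The state of a value `p` entering row `a`: either it is the row `X r` of a chain member (fixed
by all higher rows), or `p = a + d` climbs column `m+1+d`, strictly west of `Y r` and black from
row `X r + 1` to row `a - 1`. -/
def TrajectoryInv (m : ℕ) (col : ℕ × ℕ → Bool) (t : ℕ) (X Y : ℕ → ℕ) (a p : ℕ) : Prop :=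
  (∃ r, 1 ≤ r ∧ r ≤ t ∧ X r < a ∧ p = X r) ∨
  (∃ r d, r ≤ t ∧ X r < a ∧ p = a + d ∧ m + 1 + d < Y r ∧
    ∀ a', X r < a' → a' < a → col (a', m + 1 + d) = true)

namespace IsNWChain

variable {m n : ℕ} {col : ℕ × ℕ → Bool} {t : ℕ} {X Y : ℕ → ℕ}

theorem strictMonoOn_X (h : IsNWChain m n col t X Y) : StrictMonoOn X (Set.Iic t) :=
  strictMonoOn_Iic_of_lt_succ h.X_lt_succ

theorem strictAntiOn_Y (h : IsNWChain m n col t X Y) : StrictAntiOn Y (Set.Iic t) :=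
  strictAntiOn_Iic_of_succ_lt h.Y_succ_lt

theorem Y_le_Y_zero (h : IsNWChain m n col t X Y) {r : ℕ} (hr : r ≤ t) : Y r ≤ Y 0 :=
  h.strictAntiOn_Y.antitoneOn (Set.mem_Iic.mpr (Nat.zero_le t)) hr (Nat.zero_le r)

theorem exists_eq_of_black_below (h : IsNWChain m n col t X Y) {r a b : ℕ} (hr : r ≤ t)
    (hg : InGrid m n (a, b)) (hw : col (a, b) = false) (ha : X r < a) (hb : b < Y r)
    (hblack : ∀ a', X r < a' → a' < a → col (a', b) = true) :
    ∃ r', r < r' ∧ r' ≤ t ∧ a = X r' ∧ b ≤ Y r' := by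
  induction hs : t - r generalizing r with
  | zero =>
    obtain rfl : t = r := by omega
    exact (h.last a b hg hw ha hb).elim
  | succ s ih =>
    obtain ⟨hXa, hbY⟩ := h.nearest r (by omega) a b hg hw ha hb
    rcases hXa.eq_or_lt with hXa | hXa
    · exact ⟨r + 1, by omega, by omega, hXa.symm, hbY⟩
    · have hbY : b < Y (r + 1) := by
        refine hbY.lt_of_ne fun hbY => ?_
        have := (h.white (r + 1) (by omega) (by omega)).2
        rw [← hbY, hblack _ (h.X_lt_succ r (by omega)) hXa] at this
        exact Bool.noConfusion this
      obtain ⟨r', hr', hr't, hXr', hYr'⟩ := ih (by omega) hXa hbY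
        (fun a' ha' => hblack a' ((h.X_lt_succ r (by omega)).trans ha')) (by omega)
      exact ⟨r', by omega, hr't, hXr', hYr'⟩

theorem trajectoryInv_rowWord (h : IsNWChain m n col t X Y) (hY0 : Y 0 ≤ m + n + 1) {a p : ℕ}
    (ha : 1 ≤ a) (ham : a ≤ m) (hinv : TrajectoryInv m col t X Y a p) :
    TrajectoryInv m col t X Y (a + 1) (rowWord m col a n p) := by
  rcases hinv with ⟨r, hr, hrt, hXr, rfl⟩ | ⟨r, d, hrt, hXr, rfl, hdY, hblack⟩
  · rw [rowWord_apply_of_lt_or_lt (Or.inl hXr)]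
    exact Or.inl ⟨r, hr, hrt, by omega, rfl⟩
  have hYr := h.Y_le_Y_zero hrt
  have hdn : d < n := by omega
  cases hc : col (a, m + 1 + d)
  · obtain ⟨r', hrr', hr't, hXr', hYr'⟩ := h.exists_eq_of_black_below hrt
      ⟨ha, ham, by omega, by omega⟩ hc hXr hdY hblack
    obtain ⟨e, hed, he⟩ := rowWord_apply_of_white hdn hc
    rw [he]
    rcases e with _ | e
    · exact Or.inl ⟨r', by omega, hr't, by omega, by omega⟩
    · exact Or.inr ⟨r', e, hr't, by omega, by omega, by omega, fun a' _ _ => by omega⟩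
  · rw [rowWord_apply_of_black hdn hc]
    refine Or.inr ⟨r, d, hrt, by omega, by omega, hdY, fun a' ha' ha'a => ?_⟩
    rcases Nat.lt_succ_iff_lt_or_eq.mp ha'a with ha'a | rfl
    · exact hblack a' ha' ha'a
    · exact hc

theorem trajectoryInv_readingWord (h : IsNWChain m n col t X Y) (hX0 : X 0 = 0)
    (hY0 : Y 0 ≤ m + n + 1) {j : ℕ} (hj : 1 ≤ j) (hjY : m + j < Y 0) :
    TrajectoryInv m col t X Y (m + 1) (readingWord m n col j) := by
  rw [readingWord_eq_rowsWord]
  suffices ∀ a ≤ m, TrajectoryInv m col t X Y (a + 1) (rowsWord (fun a => rowWord m col a n) a j)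
    from this m le_rfl
  intro a
  induction a with
  | zero => exact fun _ => Or.inr ⟨0, j - 1, Nat.zero_le t, by omega, by simp [rowsWord]; omega,
      by omega, fun a' _ _ => by omega⟩
  | succ a ih =>
    intro ha
    rw [rowsWord_succ, Equiv.Perm.mul_apply]
    exact h.trajectoryInv_rowWord hY0 (by omega) ha (ih (by omega))

theorem readingWord_apply_mem (h : IsNWChain m n col t X Y) {k : ℕ} (hX0 : X 0 = 0)
    (hY0 : Y 0 = m + k + 1) (hk : k ≤ n) {j : ℕ} (hj : j ∈ Icc 1 k) :
    readingWord m n col j ∈ (Icc 1 t).image X ∪ (Icc (m + 1) (m + k) \ (Icc 1 t).image Y) := by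
  rw [mem_Icc] at hj
  rcases h.trajectoryInv_readingWord hX0 (by omega) hj.1 (by omega) with
    ⟨r, hr, hrt, -, hp⟩ | ⟨r, d, hrt, hXr, hp, hdY, hblack⟩
  · exact mem_union_left _ (mem_image.mpr ⟨r, mem_Icc.mpr ⟨hr, hrt⟩, hp.symm⟩)
  have hYr := h.Y_le_Y_zero hrt
  refine mem_union_right _ (mem_sdiff.mpr ⟨mem_Icc.mpr ⟨by omega, by omega⟩, fun hmem => ?_⟩)
  obtain ⟨i, hi, hYi⟩ := mem_image.mp hmem
  rw [mem_Icc] at hi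
  have hri : r < i := by
    by_contra! hir
    have := h.strictAntiOn_Y.antitoneOn (Set.mem_Iic.mpr hi.2) hrt hir
    omega
  have hXi := h.strictMonoOn_X (Set.mem_Iic.mpr hrt) (Set.mem_Iic.mpr hi.2) hri
  obtain ⟨hg, hw⟩ := h.white i hi.1 hi.2
  rw [hYi, hp, hblack (X i) hXi (by have := hg.2.1; omega)] at hw
  exact Bool.noConfusion hw

theorem image_X_subset (h : IsNWChain m n col t X Y) : (Icc 1 t).image X ⊆ Icc 1 m := by
  simp only [subset_iff, mem_image, mem_Icc]
  rintro _ ⟨i, hi, rfl⟩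
  exact ⟨(h.white i hi.1 hi.2).1.1, (h.white i hi.1 hi.2).1.2.1⟩

theorem image_Y_subset (h : IsNWChain m n col t X Y) {k : ℕ} (hY0 : Y 0 = m + k + 1) :
    (Icc 1 t).image Y ⊆ Icc (m + 1) (m + k) := by
  simp only [subset_iff, mem_image, mem_Icc]
  rintro _ ⟨i, hi, rfl⟩
  have := (h.white i hi.1 hi.2).1.2.2.1
  have := h.strictAntiOn_Y (Set.mem_Iic.mpr (Nat.zero_le t)) (Set.mem_Iic.mpr hi.2) (by omega)
  omega

theorem image_readingWord_Icc (h : IsNWChain m n col t X Y) {k : ℕ} (hX0 : X 0 = 0)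
    (hY0 : Y 0 = m + k + 1) (hk : k ≤ n) :
    (Icc 1 k).image (readingWord m n col) =
      (Icc 1 t).image X ∪ (Icc (m + 1) (m + k) \ (Icc 1 t).image Y) := by
  have hIcc : (Icc 1 t : Set ℕ) ⊆ Set.Iic t := by
    rw [coe_Icc]
    exact Set.Icc_subset_Iic_self
  have hXcard : ((Icc 1 t).image X).card = t := by
    rw [card_image_of_injOn (h.strictMonoOn_X.injOn.mono hIcc), Nat.card_Icc, Nat.add_sub_cancel]
  have hYcard : ((Icc 1 t).image Y).card = t := by
    rw [card_image_of_injOn (h.strictAntiOn_Y.injOn.mono hIcc), Nat.card_Icc, Nat.add_sub_cancel]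
  have hYsub := h.image_Y_subset hY0
  have hdisj : Disjoint ((Icc 1 t).image X) (Icc (m + 1) (m + k) \ (Icc 1 t).image Y) := by
    refine disjoint_of_subset_left h.image_X_subset (disjoint_of_subset_right sdiff_subset ?_)
    simp only [disjoint_left, mem_Icc]
    omega
  have htk : t ≤ k := by simpa [hYcard] using card_le_card hYsub
  refine eq_of_subset_of_card_le (fun u hu => ?_) ?_
  · obtain ⟨j, hj, rfl⟩ := mem_image.mp hu
    exact h.readingWord_apply_mem hX0 hY0 hk hj
  · rw [card_image_of_injective _ (Equiv.injective _), card_union_of_disjoint hdisj,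
      card_sdiff_of_subset hYsub, hXcard, hYcard, Nat.card_Icc, Nat.card_Icc]
    omega

end IsNWChain

theorem sdiff_image_eq_of_reversal {m n k : ℕ} (hkn : k ≤ n) {ω : Equiv.Perm ℕ}
    (hω1 : ∀ i, 1 ≤ i → i ≤ m → ω i = m + 1 - i)
    (hω2 : ∀ i, m + 1 ≤ i → i ≤ m + n → ω i = 2 * m + n + 1 - i)
    {R C : Finset ℕ} (hR : R ⊆ Icc 1 m) (hC : C ⊆ Icc (m + 1) (m + k)) :
    (Icc 1 m ∪ Icc (m + n - k + 1) (m + n)) \ (R ∪ (Icc (m + 1) (m + k) \ C)).image ω =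
      (Icc 1 m \ R.image (m + 1 - ·)) ∪ C.image (2 * m + n + 1 - ·) := by
  have hrows : R.image ω = R.image (m + 1 - ·) :=
    image_congr fun i hi => hω1 i (mem_Icc.mp (hR hi)).1 (mem_Icc.mp (hR hi)).2
  have hcols : ∀ D ⊆ Icc (m + 1) (m + k), D.image ω = D.image (2 * m + n + 1 - ·) :=
    fun D hD => image_congr fun i hi =>
      hω2 i (mem_Icc.mp (hD hi)).1 (by have := (mem_Icc.mp (hD hi)).2; omega)
  have hfree : (Icc (m + 1) (m + k)).image ω = Icc (m + n - k + 1) (m + n) := by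
    rw [hcols _ subset_rfl, image_const_tsub_Icc _ (by omega)]
    congr 1 <;> omega
  rw [image_union, image_sdiff _ _ ω.injective, hrows, hfree, hcols C hC]
  refine union_sdiff_union_sdiff ?_ ?_ ?_
  · simp only [disjoint_left, mem_Icc]
    omega
  · simp only [subset_iff, mem_image, mem_Icc]
    rintro _ ⟨i, hi, rfl⟩
    have := mem_Icc.mp (hR hi)
    omega
  · rw [← hcols C hC, ← hfree]
    exact image_subset_image hC

theorem grassmannNecklace_term_low_general
    (m n : ℕ)
    (ω : Equiv.Perm ℕ)
    (hω1 : ∀ i, 1 ≤ i → i ≤ m → ω i = m + 1 - i)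
    (hω2 : ∀ i, m + 1 ≤ i → i ≤ m + n → ω i = 2 * m + n + 1 - i)
    (col : ℕ × ℕ → Bool)
    (k : ℕ) (hkn : k ≤ n)
    (t : ℕ) (X Y : ℕ → ℕ)
    (hchain : IsChainRootedAt m n col (boxSE m n k).1 (boxSE m n k).2 t X Y) :
    (Finset.Icc 1 m \ Finset.image (fun i => m + 1 - X i) (Finset.Icc 1 t)) ∪
        Finset.image (fun i => 2 * m + n + 1 - Y i) (Finset.Icc 1 t) =
      (Finset.Icc 1 m ∪ Finset.Icc (m + n - k + 1) (m + n)) \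
        Finset.image (fun j => ω (assocPerm m n col j)) (Finset.Icc 1 k) := by
  rw [show boxSE m n k = (0 + 1, m + k) by simp [boxSE, hkn]] at hchain
  have h : IsNWChain m n col t (update X 0 0) (update Y 0 (m + k + 1)) :=
    isNWChain_of_isChainRootedAt hchain
  have h0 : 0 ∉ Icc 1 t := by simp
  have hv := h.image_readingWord_Icc (by simp) (by simp) hkn
  rw [image_update_of_notMem h0, image_update_of_notMem h0] at hv
  rw [show (fun j => ω (assocPerm m n col j)) = ω ∘ readingWord m n col from rfl,
    ← image_image, hv,
    sdiff_image_eq_of_reversal hkn hω1 hω2 ?hX ?hY, image_image, image_image]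
  · rfl
  · simpa [image_update_of_notMem h0] using h.image_X_subset
  · simpa [image_update_of_notMem h0] using h.image_Y_subset rfl

/-- Let `ω ∈ S_{m+n}` map `i ↦ m+1-i` on `{1,...,m}` and `i ↦ 2m+n+1-i` on `{m+1,...,m+n}`.
Let `col` be an `m × n` Cauchon diagram with associated permutation `v`, let `k ∈ {1,...,n}`,
and let `(X 1, Y 1),...,(X t, Y t)` be the chain rooted at box `k` on the south-east border.
Then `({1,...,m} \ {m+1-X i}) ∪ {2m+n+1-Y i} =
({1,...,m} ∪ {m+n-k+1,...,m+n}) \ (ω ∘ v)({1,...,k})`. -/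
theorem grassmannNecklace_term_low
    (m n : ℕ) (hm : 2 ≤ m) (hn : 2 ≤ n)
    (ω : Equiv.Perm ℕ)
    (hω1 : ∀ i, 1 ≤ i → i ≤ m → ω i = m + 1 - i)
    (hω2 : ∀ i, m + 1 ≤ i → i ≤ m + n → ω i = 2 * m + n + 1 - i)
    (hω3 : ∀ i, i = 0 ∨ m + n < i → ω i = i)
    (col : ℕ × ℕ → Bool) (hC : IsCauchon m n col)
    (k : ℕ) (hk1 : 1 ≤ k) (hkn : k ≤ n)
    (t : ℕ) (X Y : ℕ → ℕ)
    (hchain : IsChainRootedAt m n col (boxSE m n k).1 (boxSE m n k).2 t X Y) :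
    (Finset.Icc 1 m \ Finset.image (fun i => m + 1 - X i) (Finset.Icc 1 t)) ∪
        Finset.image (fun i => 2 * m + n + 1 - Y i) (Finset.Icc 1 t) =
      (Finset.Icc 1 m ∪ Finset.Icc (m + n - k + 1) (m + n)) \
        Finset.image (fun j => ω (assocPerm m n col j)) (Finset.Icc 1 k) :=
  grassmannNecklace_term_low_general m n ω hω1 hω2 col k hkn t X Y hchain
end

section
/- Let m, n ≥ 1 and let B be a real m×n matrix. Define θ(B) to be the real m×(m+n) matrix whose first m columns form the m×m identity matrix and whose (m+j)-th column, for j ∈ {1,...,n}, has i-th entry (-1)^{m-i} · B_{i, n+1-j}. Then for all subsets S ⊆ {1,...,m} and T ⊆ {1,...,n} with |S| = |T|, the minor of B with row set S and column set T (the determinant of the submatrix of B on rows S and columns T, each taken in increasing order) equals the maximal minor Δ_I(θ(B)), where I = ({1,...,m} \ S) ∪ {m+n+1-t : t ∈ T} and Δ_I(θ(B)) denotes the determinant of the m×m submatrix of θ(B) whose columns are indexed by I taken in increasing order. -/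
/-!
Induction on `m`. For `m + 1` rows, the rows `≥ 2` and columns `≥ 2` of `θ(B)`, with indices
shifted down by one, form `θ(B')` for `m` rows, where `B'` is `B` without its first row.

If `1 ∉ S`, then `1 ∈ I` and column 1 of `θ(B)` is the unit vector `e₁`; expanding along it leaves
the maximal minor of the smaller problem. If `1 ∈ S`, expand both minors along row 1: the first row
of `θ(B)` vanishes on the identity columns of `I`, its entry in column `m + n + 2 - t` is
`(-1)^m B₁ₜ`, and that column is preceded in `I` by `m - p` columns when `t` is preceded in `T` by
`p` elements, so the Laplace signs agree and the cofactors match by induction.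
-/

/-- The minor of `M` with row set `R` and column set `C` (rows and columns each taken in
increasing order); defined to be `0` if the cardinalities do not match. -/
noncomputable def minorN (M : ℕ → ℕ → ℝ) (R C : Finset ℕ) : ℝ :=
  if h : C.card = R.card then
    Matrix.det (Matrix.of fun i j : Fin R.card =>
      M ((R.orderIsoOfFin rfl) i).1 ((C.orderIsoOfFin h) j).1)
  else 0

/-- The matrix `θ(B)`: its first `m` columns form the `m × m` identity matrix, and for
`j ∈ {1,...,n}` the `(m+j)`-th column has `i`-th entry `(-1)^(m-i) * B i (n+1-j)`. -/
noncomputable def theta (m n : ℕ) (B : ℕ → ℕ → ℝ) : ℕ → ℕ → ℝ := fun i c =>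
  if c ≤ m then (if i = c then 1 else 0)
  else (-1 : ℝ) ^ (m - i) * B i (n + 1 - (c - m))

namespace Finset

section LinearOrder

variable {α : Type*} [LinearOrder α]

lemma card_filter_lt_orderEmbOfFin {s : Finset α} {k : ℕ} (h : #s = k) (i : Fin k) :
    #{x ∈ s | x < s.orderEmbOfFin h i} = i := by
  have : {x ∈ s | x < s.orderEmbOfFin h i} = (Iio i).map (s.orderEmbOfFin h).toEmbedding := by
    ext x
    constructor
    · intro hx
      obtain ⟨hxs, hlt⟩ := mem_filter.1 hx
      obtain ⟨j, rfl⟩ : x ∈ Set.range (s.orderEmbOfFin h) := by simpa using hxs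
      simpa using hlt
    · simp only [mem_map, mem_Iio, RelEmbedding.coe_toEmbedding, mem_filter]
      rintro ⟨j, hj, rfl⟩
      exact ⟨orderEmbOfFin_mem s h j, (s.orderEmbOfFin h).strictMono hj⟩
  rw [this, card_map, Fin.card_Iio]

lemma orderEmbOfFin_erase {s : Finset α} {k : ℕ} (h : #s = k + 1) (p : Fin (k + 1))
    (h' : #(s.erase (s.orderEmbOfFin h p)) = k) (j : Fin k) :
    (s.erase (s.orderEmbOfFin h p)).orderEmbOfFin h' j = s.orderEmbOfFin h (p.succAbove j) := by
  refine (congrFun (orderEmbOfFin_unique h' (fun j => ?_)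
    ((s.orderEmbOfFin h).strictMono.comp (Fin.strictMono_succAbove p))) j).symm
  exact mem_erase.2 ⟨fun hc => Fin.succAbove_ne p j ((s.orderEmbOfFin h).injective hc),
    orderEmbOfFin_mem s h _⟩

lemma orderEmbOfFin_image {β : Type*} [LinearOrder β] {s : Finset α} {k : ℕ} (h : #s = k)
    {f : α → β} (hf : StrictMono f) (h' : #(s.image f) = k) (j : Fin k) :
    (s.image f).orderEmbOfFin h' j = f (s.orderEmbOfFin h j) :=
  (congrFun (orderEmbOfFin_unique h' (fun j => mem_image_of_mem f (orderEmbOfFin_mem s h j))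
    (hf.comp (s.orderEmbOfFin h).strictMono)) j).symm

lemma sum_orderEmbOfFin {β : Type*} [AddCommMonoid β] (s : Finset α) {k : ℕ} (h : #s = k)
    (f : α → β) : ∑ j, f (s.orderEmbOfFin h j) = ∑ x ∈ s, f x := by
  conv_rhs => rw [← map_orderEmbOfFin_univ s h, sum_map]
  rfl

lemma card_filter_lt_add_card_filter_gt {s : Finset α} {a : α} (ha : a ∈ s) :
    #{x ∈ s | x < a} + #{x ∈ s | a < x} + 1 = #s := by
  have hnot : {x ∈ s | ¬x < a} = insert a {x ∈ s | a < x} := by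
    ext x
    simp only [mem_filter, mem_insert]
    constructor
    · rintro ⟨hx, hxa⟩
      rcases (not_lt.1 hxa).eq_or_lt with rfl | h
      · exact Or.inl rfl
      · exact Or.inr ⟨hx, h⟩
    · rintro (rfl | ⟨hx, h⟩)
      · exact ⟨ha, lt_irrefl x⟩
      · exact ⟨hx, h.not_gt⟩
  have := card_filter_add_card_filter_not (s := s) (· < a)
  rw [hnot, card_insert_of_notMem (by simp)] at this
  omega

end LinearOrder

lemma filter_lt_one_eq_empty {s : Finset ℕ} (h : 0 ∉ s) : {x ∈ s | x < 1} = ∅ :=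
  filter_eq_empty_iff.2 fun _ hx hlt => h (Nat.lt_one_iff.1 hlt ▸ hx)

lemma mem_image_add_one {s : Finset ℕ} {x : ℕ} : x ∈ s.image (· + 1) ↔ 0 < x ∧ x - 1 ∈ s := by
  rw [mem_image]
  constructor
  · rintro ⟨y, hy, rfl⟩
    simpa using hy
  · rintro ⟨hx, hs⟩
    exact ⟨x - 1, hs, by omega⟩

lemma Icc_erase_one_eq_image_add_one (m : ℕ) :
    (Icc 1 (m + 1)).erase 1 = (Icc 1 m).image (· + 1) := by
  ext x
  simp only [mem_erase, mem_Icc, mem_image]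
  constructor
  · rintro ⟨hx, h1, hm⟩
    exact ⟨x - 1, by omega, by omega⟩
  · rintro ⟨y, hy, rfl⟩
    omega

lemma exists_image_add_one_eq_erase_one {m : ℕ} {S : Finset ℕ} (hS : S ⊆ Icc 1 (m + 1)) :
    ∃ S' ⊆ Icc 1 m, S'.image (· + 1) = S.erase 1 := by
  refine ⟨(S.erase 1).image (· - 1), fun x hx => ?_, ?_⟩
  · obtain ⟨y, hy, rfl⟩ := mem_image.1 hx
    have := mem_Icc.1 (hS (mem_of_mem_erase hy)); have := ne_of_mem_erase hy
    exact mem_Icc.2 ⟨by omega, by omega⟩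
  · rw [image_image]
    refine (image_congr fun x hx => ?_).trans image_id'
    have := mem_Icc.1 (hS (mem_of_mem_erase hx)); have := ne_of_mem_erase hx
    simp only [Function.comp_apply]
    omega

end Finset

lemma neg_one_pow_mul_neg_one_pow_of_add_eq {R : Type*} [Monoid R] [HasDistribNeg R]
    {a b c : ℕ} (h : a + b = c) : (-1 : R) ^ a * (-1) ^ c = (-1) ^ b := by
  rw [← h, pow_add, ← mul_assoc, ← pow_add, ← two_mul, pow_mul, neg_one_sq, one_pow, one_mul]

open Finset

section minorN

variable (M : ℕ → ℕ → ℝ) {R C : Finset ℕ}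

lemma minorN_of_card_eq {k : ℕ} (hR : #R = k) (hC : #C = k) :
    minorN M R C =
      (Matrix.of fun i j : Fin k => M (R.orderEmbOfFin hR i) (C.orderEmbOfFin hC j)).det := by
  subst hR
  rw [minorN, dif_pos hC]
  rfl

lemma minorN_empty : minorN M ∅ ∅ = 1 := by
  rw [minorN_of_card_eq M card_empty card_empty, Matrix.det_fin_zero]

lemma minorN_transpose (hRC : #C = #R) : minorN (fun i j => M j i) C R = minorN M R C := by
  rw [minorN_of_card_eq _ hRC rfl, minorN_of_card_eq M rfl hRC, ← Matrix.det_transpose]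
  rfl

lemma minorN_image_image {f g : ℕ → ℕ} (hf : StrictMono f) (hg : StrictMono g) (hRC : #C = #R) :
    minorN M (R.image f) (C.image g) = minorN (fun i j => M (f i) (g j)) R C := by
  have hfR : #(R.image f) = #R := card_image_of_injective R hf.injective
  have hgC : #(C.image g) = #R := (card_image_of_injective C hg.injective).trans hRC
  rw [minorN_of_card_eq M hfR hgC, minorN_of_card_eq _ rfl hRC]
  simp only [orderEmbOfFin_image rfl hf, orderEmbOfFin_image hRC hg]

lemma minorN_image_add_one_left (hRC : #C = #R) :
    minorN M (R.image (· + 1)) C = minorN (fun i j => M (i + 1) j) R C := by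
  simpa only [image_id, id] using minorN_image_image M add_left_strictMono strictMono_id hRC

lemma minorN_eq_sum_row (hRC : #C = #R) {r : ℕ} (hr : r ∈ R) :
    minorN M R C = ∑ c ∈ C, (-1) ^ (#{x ∈ R | x < r} + #{x ∈ C | x < c}) * M r c *
      minorN M (R.erase r) (C.erase c) := by
  obtain ⟨k, hk⟩ : ∃ k, #R = k + 1 := Nat.exists_eq_add_one.2 (card_pos.2 ⟨r, hr⟩)
  obtain ⟨i, rfl⟩ : r ∈ Set.range (R.orderEmbOfFin hk) := by simpa using hr
  have hC : #C = k + 1 := hRC.trans hk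
  have hR' : #(R.erase (R.orderEmbOfFin hk i)) = k := by
    rw [card_erase_of_mem hr, hk, Nat.add_sub_cancel]
  rw [minorN_of_card_eq M hk hC, Matrix.det_succ_row _ i, ← sum_orderEmbOfFin C hC]
  refine sum_congr rfl fun j _ => ?_
  have hC' : #(C.erase (C.orderEmbOfFin hC j)) = k := by
    rw [card_erase_of_mem (orderEmbOfFin_mem C hC j), hC, Nat.add_sub_cancel]
  rw [card_filter_lt_orderEmbOfFin, card_filter_lt_orderEmbOfFin, minorN_of_card_eq M hR' hC']
  simp only [Matrix.of_apply, Matrix.submatrix, orderEmbOfFin_erase]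

lemma minorN_eq_of_column_eq_zero (hRC : #C = #R) {r c : ℕ} (hr : r ∈ R) (hc : c ∈ C)
    (hcol : ∀ x ∈ R, x ≠ r → M x c = 0) :
    minorN M R C = (-1) ^ (#{x ∈ R | x < r} + #{x ∈ C | x < c}) * M r c *
      minorN M (R.erase r) (C.erase c) := by
  have hRC' : #(C.erase c) = #(R.erase r) := by
    rw [card_erase_of_mem hr, card_erase_of_mem hc, hRC]
  rw [← minorN_transpose M hRC, minorN_eq_sum_row _ hRC.symm hc,
    sum_eq_single_of_mem r hr fun x hx hxr => by rw [hcol x hx hxr, mul_zero, zero_mul],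
    minorN_transpose M hRC', add_comm]

end minorN

lemma theta_succ_succ (m n : ℕ) (B : ℕ → ℕ → ℝ) (i j : ℕ) :
    theta (m + 1) n B (i + 1) (j + 1) = theta m n (fun i j => B (i + 1) j) i j := by
  simp only [theta, add_le_add_iff_right, add_left_inj, Nat.add_sub_add_right]

lemma minorN_theta_succ {m n : ℕ} (B : ℕ → ℕ → ℝ) {C : Finset ℕ} (hC : #C = m) :
    minorN (theta (m + 1) n B) ((Icc 1 (m + 1)).erase 1) (C.image (· + 1)) =
      minorN (theta m n fun i j => B (i + 1) j) (Icc 1 m) C := by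
  rw [Icc_erase_one_eq_image_add_one, minorN_image_image _ add_left_strictMono
    add_left_strictMono (by rw [hC, Nat.card_Icc, Nat.add_sub_cancel])]
  simp only [theta_succ_succ]

/-- The column set `I`. -/
def thetaCols (m n : ℕ) (S T : Finset ℕ) : Finset ℕ :=
  (Icc 1 m \ S) ∪ T.image fun t => m + n + 1 - t

section thetaCols

variable {m n : ℕ} {S T : Finset ℕ}

lemma card_thetaCols (hS : S ⊆ Icc 1 m) (hT : T ⊆ Icc 1 n) :
    #(thetaCols m n S T) = m - #S + #T := by
  have hinj : Set.InjOn (fun t => m + n + 1 - t) T := fun x hx y hy hxy => by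
    have := mem_Icc.1 (hT hx); have := mem_Icc.1 (hT hy); simp only at hxy; omega
  have hdisj : Disjoint (Icc 1 m \ S) (T.image fun t => m + n + 1 - t) := by
    refine disjoint_left.2 fun x hx hxT => ?_
    obtain ⟨t, ht, rfl⟩ := mem_image.1 hxT
    have := mem_Icc.1 (hT ht); have := mem_Icc.1 (mem_sdiff.1 hx).1; omega
  rw [thetaCols, card_union_of_disjoint hdisj, card_sdiff_of_subset hS, card_image_of_injOn hinj,
    Nat.card_Icc, Nat.add_sub_cancel]

lemma card_thetaCols_of_card_eq (hS : S ⊆ Icc 1 m) (hT : T ⊆ Icc 1 n) (hST : #S = #T) :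
    #(thetaCols m n S T) = m := by
  have := card_le_card hS
  rw [Nat.card_Icc] at this
  rw [card_thetaCols hS hT, ← hST]
  omega

lemma card_filter_lt_thetaCols (hS : S ⊆ Icc 1 m) (hT : T ⊆ Icc 1 n) (hST : #S = #T) {t : ℕ}
    (ht : t ∈ T) : #{x ∈ thetaCols m n S T | x < m + n + 1 - t} + #{x ∈ T | x < t} + 1 = m := by
  have := fun t (ht : t ∈ T) => mem_Icc.1 (hT ht)
  have hfilter : {x ∈ thetaCols m n S T | x < m + n + 1 - t} =
      thetaCols m n S {y ∈ T | t < y} := by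
    ext x
    simp only [thetaCols, mem_filter, mem_union, mem_sdiff, mem_Icc, mem_image]
    grind
  have hT' := card_filter_lt_add_card_filter_gt ht
  have hSm := card_le_card hS
  rw [Nat.card_Icc] at hSm
  rw [hfilter, card_thetaCols hS (filter_subset _ _ |>.trans hT)]
  omega

lemma zero_notMem_thetaCols (hT : T ⊆ Icc 1 n) : 0 ∉ thetaCols m n S T := by
  simp only [thetaCols, mem_union, mem_sdiff, mem_Icc, mem_image, not_or, not_exists, not_and]
  exact ⟨by omega, fun t ht => by have := mem_Icc.1 (hT ht); omega⟩

lemma one_mem_thetaCols (hS : 1 ∉ S) : 1 ∈ thetaCols (m + 1) n S T :=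
  mem_union_left _ (mem_sdiff.2 ⟨mem_Icc.2 ⟨le_rfl, Nat.le_add_left 1 m⟩, hS⟩)

lemma thetaCols_image_add_one_erase_one (hT : T ⊆ Icc 1 n) :
    (thetaCols (m + 1) n (S.image (· + 1)) T).erase 1 = (thetaCols m n S T).image (· + 1) := by
  have := fun t (ht : t ∈ T) => mem_Icc.1 (hT ht)
  ext x
  simp only [thetaCols, mem_erase, mem_union, mem_sdiff, mem_Icc, mem_image_add_one]
  simp only [mem_image]
  grind

lemma thetaCols_insert_one_image_add_one (hT : T ⊆ Icc 1 n) :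
    thetaCols (m + 1) n (insert 1 (S.image (· + 1))) T = (thetaCols m n S T).image (· + 1) := by
  have := fun t (ht : t ∈ T) => mem_Icc.1 (hT ht)
  ext x
  simp only [thetaCols, mem_union, mem_sdiff, mem_Icc, mem_image_add_one, mem_insert]
  simp only [mem_image]
  grind

lemma thetaCols_erase (hT : T ⊆ Icc 1 n) {t : ℕ} (ht : t ∈ T) :
    (thetaCols m n S T).erase (m + n + 1 - t) = thetaCols m n S (T.erase t) := by
  have := fun t (ht : t ∈ T) => mem_Icc.1 (hT ht)
  ext x
  simp only [thetaCols, mem_union, mem_sdiff, mem_Icc, mem_image, mem_erase]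
  grind

end thetaCols

section InductionStep

variable {m n : ℕ} {B : ℕ → ℕ → ℝ} {S T : Finset ℕ}

lemma minorN_eq_minorN_theta_succ_of_image_add_one (hS : S ⊆ Icc 1 m) (hT : T ⊆ Icc 1 n)
    (hST : #S = #T)
    (ih : minorN (fun i j => B (i + 1) j) S T =
      minorN (theta m n fun i j => B (i + 1) j) (Icc 1 m) (thetaCols m n S T)) :
    minorN B (S.image (· + 1)) T =
      minorN (theta (m + 1) n B) (Icc 1 (m + 1)) (thetaCols (m + 1) n (S.image (· + 1)) T) := by
  have hS' : S.image (· + 1) ⊆ Icc 1 (m + 1) := fun x hx => by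
    have := mem_Icc.1 (hS (mem_image_add_one.1 hx).2)
    exact mem_Icc.2 ⟨by omega, by omega⟩
  have hcard : #(S.image (· + 1)) = #S := card_image_of_injective S (add_left_injective 1)
  have hcols : #(thetaCols (m + 1) n (S.image (· + 1)) T) = #(Icc 1 (m + 1)) := by
    rw [card_thetaCols_of_card_eq hS' hT (hcard.trans hST), Nat.card_Icc, Nat.add_sub_cancel]
  have h1 : 1 ∉ S.image (· + 1) := fun h => by simpa using hS (mem_image_add_one.1 h).2
  rw [minorN_image_add_one_left B hST.symm, ih, minorN_eq_of_column_eq_zero _ hcols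
    (left_mem_Icc.2 (Nat.le_add_left 1 m)) (one_mem_thetaCols h1) fun x _ hx => by simp [theta, hx],
    thetaCols_image_add_one_erase_one hT, minorN_theta_succ B (card_thetaCols_of_card_eq hS hT hST),
    filter_lt_one_eq_empty (by simp), filter_lt_one_eq_empty (zero_notMem_thetaCols hT)]
  simp [theta]

lemma minorN_theta_succ_erase_one_erase (hS : S ⊆ Icc 1 m) (hT : T ⊆ Icc 1 n)
    (hST : #S + 1 = #T) {t : ℕ} (ht : t ∈ T) :
    minorN (theta (m + 1) n B) ((Icc 1 (m + 1)).erase 1)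
        ((thetaCols (m + 1) n (insert 1 (S.image (· + 1))) T).erase (m + 1 + n + 1 - t)) =
      minorN (theta m n fun i j => B (i + 1) j) (Icc 1 m) (thetaCols m n S (T.erase t)) := by
  have hTe : T.erase t ⊆ Icc 1 n := (erase_subset t T).trans hT
  have hSTe : #S = #(T.erase t) := by rw [card_erase_of_mem ht, ← hST, Nat.add_sub_cancel]
  rw [thetaCols_erase hT ht, thetaCols_insert_one_image_add_one hTe,
    minorN_theta_succ B (card_thetaCols_of_card_eq hS hTe hSTe)]

lemma minorN_eq_minorN_theta_succ_of_insert_one (hS : S ⊆ Icc 1 m) (hT : T ⊆ Icc 1 n)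
    (hST : #S + 1 = #T)
    (ih : ∀ t ∈ T, minorN (fun i j => B (i + 1) j) S (T.erase t) =
      minorN (theta m n fun i j => B (i + 1) j) (Icc 1 m) (thetaCols m n S (T.erase t))) :
    minorN B (insert 1 (S.image (· + 1))) T = minorN (theta (m + 1) n B) (Icc 1 (m + 1))
      (thetaCols (m + 1) n (insert 1 (S.image (· + 1))) T) := by
  set S₁ := insert 1 (S.image (· + 1))
  have h1 : 1 ∉ S.image (· + 1) := fun h => by simpa using hS (mem_image_add_one.1 h).2
  have hS₁ : S₁ ⊆ Icc 1 (m + 1) := insert_subset (left_mem_Icc.2 (Nat.le_add_left 1 m))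
    fun x hx => by
      have := mem_Icc.1 (hS (mem_image_add_one.1 hx).2)
      exact mem_Icc.2 ⟨by omega, by omega⟩
  have hS₁T : #S₁ = #T := by
    rw [card_insert_of_notMem h1, card_image_of_injective S (add_left_injective 1), hST]
  have hcols : #(thetaCols (m + 1) n S₁ T) = #(Icc 1 (m + 1)) := by
    rw [card_thetaCols_of_card_eq hS₁ hT hS₁T, Nat.card_Icc, Nat.add_sub_cancel]
  have hinj : Set.InjOn (fun t => m + 1 + n + 1 - t) T := fun x hx y hy hxy => by
    have := mem_Icc.1 (hT hx); have := mem_Icc.1 (hT hy); simp only at hxy; omega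
  have hsub : T.image (fun t => m + 1 + n + 1 - t) ⊆ thetaCols (m + 1) n S₁ T :=
    subset_union_right
  rw [minorN_eq_sum_row B hS₁T.symm (mem_insert_self 1 _), minorN_eq_sum_row _ hcols
    (left_mem_Icc.2 (Nat.le_add_left 1 m)), ← sum_subset hsub ?_, sum_image hinj]
  · refine sum_congr rfl fun t ht => ?_
    have htn := mem_Icc.1 (hT ht)
    have hentry : theta (m + 1) n B 1 (m + 1 + n + 1 - t) = (-1) ^ m * B 1 t := by
      rw [theta, if_neg (by omega), Nat.add_sub_cancel,
        show n + 1 - (m + 1 + n + 1 - t - (m + 1)) = t by omega]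
    have hsign := Nat.add_right_cancel (card_filter_lt_thetaCols hS₁ hT hS₁T ht)
    rw [hentry, minorN_theta_succ_erase_one_erase hS hT hST ht, ← ih t ht, erase_insert h1,
      minorN_image_add_one_left B (card_erase_of_mem ht ▸ by omega),
      filter_lt_one_eq_empty (by simp [S₁]), filter_lt_one_eq_empty (by simp), card_empty,
      zero_add, zero_add, ← neg_one_pow_mul_neg_one_pow_of_add_eq hsign]
    ring
  · intro x hx hxT
    have hx' := mem_sdiff.1 ((mem_union.1 hx).resolve_right hxT)
    have hx1 : x ≠ 1 := fun h => hx'.2 (h ▸ mem_insert_self 1 _)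
    rw [theta, if_pos (mem_Icc.1 hx'.1).2, if_neg (Ne.symm hx1), mul_zero, zero_mul]

end InductionStep

theorem minor_eq_maximalMinor_theta_general
    (m n : ℕ) (B : ℕ → ℕ → ℝ)
    (S T : Finset ℕ) (hS : S ⊆ Finset.Icc 1 m) (hT : T ⊆ Finset.Icc 1 n)
    (hST : S.card = T.card) :
    minorN B S T =
      minorN (theta m n B) (Finset.Icc 1 m)
        ((Finset.Icc 1 m \ S) ∪ T.image fun t => m + n + 1 - t) := by
  induction m generalizing B S T with
  | zero =>
    obtain rfl : S = ∅ := subset_empty.1 (by simpa using hS)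
    obtain rfl : T = ∅ := card_eq_zero.1 (by rw [← hST, card_empty])
    simp [minorN_empty]
  | succ m ih =>
    obtain ⟨S', hS', hS'S⟩ := exists_image_add_one_eq_erase_one hS
    have hcard : #(S'.image (· + 1)) = #S' := card_image_of_injective _ (add_left_injective 1)
    by_cases h1 : 1 ∈ S
    · have h1' : 1 ∉ S'.image (· + 1) := hS'S ▸ notMem_erase 1 S
      rw [← insert_erase h1, ← hS'S] at hST ⊢
      rw [card_insert_of_notMem h1', hcard] at hST
      refine minorN_eq_minorN_theta_succ_of_insert_one hS' hT hST fun t ht =>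
        ih _ _ _ hS' ((erase_subset t T).trans hT) ?_
      rw [card_erase_of_mem ht, ← hST, Nat.add_sub_cancel]
    · rw [← erase_eq_of_notMem h1, ← hS'S] at hST ⊢
      rw [hcard] at hST
      exact minorN_eq_minorN_theta_succ_of_image_add_one hS' hT hST (ih _ _ _ hS' hT hST)

/-- For `S ⊆ {1,...,m}`, `T ⊆ {1,...,n}` with `|S| = |T|`, the minor of `B` with row set
`S` and column set `T` equals the maximal minor `Δ_I(θ(B))` where
`I = ({1,...,m} \ S) ∪ {m+n+1-t : t ∈ T}`. -/
theorem minor_eq_maximalMinor_theta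
    (m n : ℕ) (hm : 1 ≤ m) (hn : 1 ≤ n) (B : ℕ → ℕ → ℝ)
    (S T : Finset ℕ) (hS : S ⊆ Finset.Icc 1 m) (hT : T ⊆ Finset.Icc 1 n)
    (hST : S.card = T.card) :
    minorN B S T =
      minorN (theta m n B) (Finset.Icc 1 m)
        ((Finset.Icc 1 m \ S) ∪ T.image fun t => m + n + 1 - t) :=
  minor_eq_maximalMinor_theta_general m n B S T hS hT hST
end
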